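/- Fix a real number c > 0. Let p_{n,k} (0 ≤ k ≤ n) be the unique real numbers with x^n = Σ_{k=0}^n p_{n,k}·Π_k(x), extended by p_{n,k} = 0 for k > n, and let P_k(z) = Σ_{n≥0} p_{n,k} z^n ∈ ℝ[[z]] be the associated formal power series. Then for every k ≥ 0 one has the formal power series identity c^k·P_k(z) = (P_0(z) − 1)^k · P_0(z). -/

import Mathlib

open Polynomial

/-- The argument substitution `u = (x - (1+c)) / (2√c)` as a real polynomial. -/
noncomputable def shiftArg (c : ℝ) : Polynomial ℝ :=
  C (1 / (2 * Real.sqrt c)) * (X - C (1 + c))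

/-- The shifted Chebyshev polynomials of the second kind:
`Π_0 = 1`, `Π_n(x) = c^{n/2} U_n(u) + c^{(n-1)/2} U_{n-1}(u)` with
`u = (x-(1+c))/(2√c)`, for `n ≥ 1`. -/
noncomputable def PiP (c : ℝ) : ℕ → Polynomial ℝ
  | 0 => 1
  | n + 1 =>
      C (Real.sqrt c ^ (n + 1)) *
        (Polynomial.Chebyshev.U ℝ ((n : ℤ) + 1)).comp (shiftArg c) +
      C (Real.sqrt c ^ n) * (Polynomial.Chebyshev.U ℝ (n : ℤ)).comp (shiftArg c)

/-!
The polynomials `Π_k` are monic of degree `k` and satisfy `x Π_0 = Π_1 + c Π_0`,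
`x Π_{k+1} = Π_{k+2} + (1+c) Π_{k+1} + c Π_k`, so they form a basis of `ℝ[X]` whose coordinate
functionals turn multiplication by `x` into a tridiagonal recurrence for `p_{n,k}` in `n`.
For the generating functions this reads `P_0 = 1 + c z (P_0 + P_1)` and
`P_{k+1} = z (P_k + (1+c) P_{k+1} + c P_{k+2})`. The defects `D_k = c P_{k+1} - (P_0 - 1) P_k`
then satisfy `D_k = z · (c + P_0) D_k + z · c D_{k+1} - z · P_k D_0`, so every power of `z`
divides every `D_k` and they all vanish; iterating `c P_{k+1} = (P_0 - 1) P_k` gives the claim.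
-/

namespace PowerSeries

variable {R : Type*} [CommRing R]

theorem eq_zero_of_forall_X_pow_dvd {φ : R⟦X⟧} (h : ∀ n, X ^ n ∣ φ) : φ = 0 := by
  ext n
  exact X_pow_dvd_iff.mp (h (n + 1)) n n.lt_succ_self

variable [IsDomain R] {c : R} {P : ℕ → R⟦X⟧}

theorem C_mul_succ_eq_of_threeTermRec (hc : c ≠ 0) (h₀ : P 0 = 1 + X * (C c * (P 0 + P 1)))
    (hsucc : ∀ k, P (k + 1) = X * (P k + C (1 + c) * P (k + 1) + C c * P (k + 2))) (k : ℕ) :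
    C c * P (k + 1) = (P 0 - 1) * P k := by
  set D : ℕ → R⟦X⟧ := fun k => C c * P (k + 1) - (P 0 - 1) * P k with hD
  have hD_rec : ∀ k, D k = X * ((C c + P 0) * D k + C c * D (k + 1) - P k * D 0) := by
    intro k
    refine mul_left_cancel₀ ((map_ne_zero_iff _ C_injective).mpr hc) ?_
    have hk := hsucc k
    rw [map_add, map_one] at hk
    simp only [hD]
    linear_combination (C c) ^ 2 * hk - C c * P k * h₀
  have hdvd : ∀ n k, X ^ n ∣ D k := by
    intro n
    induction n with
    | zero => simp
    | succ n ih =>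
      intro k
      rw [hD_rec k, pow_succ']
      exact mul_dvd_mul_left X (dvd_sub (dvd_add (dvd_mul_of_dvd_right (ih k) _)
        (dvd_mul_of_dvd_right (ih (k + 1)) _)) (dvd_mul_of_dvd_right (ih 0) _))
  exact sub_eq_zero.mp (eq_zero_of_forall_X_pow_dvd fun n => hdvd n k)

theorem C_pow_mul_eq_of_threeTermRec (hc : c ≠ 0) (h₀ : P 0 = 1 + X * (C c * (P 0 + P 1)))
    (hsucc : ∀ k, P (k + 1) = X * (P k + C (1 + c) * P (k + 1) + C c * P (k + 2))) (k : ℕ) :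
    C (c ^ k) * P k = (P 0 - 1) ^ k * P 0 := by
  induction k with
  | zero => simp
  | succ k ih =>
    calc C (c ^ (k + 1)) * P (k + 1) = C (c ^ k) * (C c * P (k + 1)) := by
          rw [pow_succ, map_mul, mul_assoc]
      _ = (P 0 - 1) * (C (c ^ k) * P k) := by
          rw [C_mul_succ_eq_of_threeTermRec hc h₀ hsucc]; ring
      _ = (P 0 - 1) ^ (k + 1) * P 0 := by rw [ih]; ring

end PowerSeries

namespace ShiftedChebyshev

variable {c : ℝ}

noncomputable def scaledU (c : ℝ) (n : ℕ) : ℝ[X] :=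
  C (√c ^ n) * (Chebyshev.U ℝ n).comp (shiftArg c)

theorem X_sub_C_eq_C_mul_shiftArg (hc : 0 < c) :
    X - C (1 + c) = C (2 * √c) * shiftArg c := by
  have : √c ≠ 0 := by positivity
  rw [shiftArg, ← mul_assoc, ← C_mul, mul_one_div_cancel (by positivity), C_1, one_mul]

theorem scaledU_zero : scaledU c 0 = 1 := by
  simp [scaledU]

theorem scaledU_one (hc : 0 < c) : scaledU c 1 = X - C (1 + c) := by
  rw [X_sub_C_eq_C_mul_shiftArg hc]
  simp only [scaledU, pow_one, Nat.cast_one, Chebyshev.U_one, mul_comp, ofNat_comp, X_comp, C_mul,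
    map_ofNat]
  ring

theorem scaledU_add_two (hc : 0 < c) (n : ℕ) :
    scaledU c (n + 2) = (X - C (1 + c)) * scaledU c (n + 1) - C c * scaledU c n := by
  have hU := congrArg (·.comp (shiftArg c)) (Chebyshev.U_add_two ℝ n)
  simp only [sub_comp, mul_comp, ofNat_comp, X_comp] at hU
  have hcs : C c = C √c ^ 2 := by rw [← C_pow, Real.sq_sqrt hc.le]
  simp only [scaledU, X_sub_C_eq_C_mul_shiftArg hc, hcs]
  push_cast
  rw [hU]
  simp only [C_mul, C_pow, map_ofNat]
  ring

theorem PiP_succ (n : ℕ) : PiP c (n + 1) = scaledU c (n + 1) + scaledU c n := by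
  simp [PiP, scaledU]

theorem PiP_one (hc : 0 < c) : PiP c 1 = X - C c := by
  rw [PiP_succ, scaledU_one hc, scaledU_zero, C_add, C_1]
  ring

theorem PiP_add_two (hc : 0 < c) (k : ℕ) :
    PiP c (k + 2) = (X - C (1 + c)) * PiP c (k + 1) - C c * PiP c k := by
  cases k with
  | zero =>
    rw [PiP_succ, PiP_succ, scaledU_add_two hc, scaledU_one hc, scaledU_zero, PiP]
    ring
  | succ k =>
    rw [PiP_succ, PiP_succ, PiP_succ, scaledU_add_two hc, scaledU_add_two hc]
    ring

theorem monic_PiP_and_natDegree (hc : 0 < c) (k : ℕ) :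
    (PiP c k).Monic ∧ (PiP c k).natDegree = k := by
  induction k using Nat.strong_induction_on with
  | _ k ih =>
    match k with
    | 0 => exact ⟨monic_one, natDegree_one⟩
    | 1 => rw [PiP_one hc]; exact ⟨monic_X_sub_C c, natDegree_X_sub_C c⟩
    | k + 2 =>
      obtain ⟨hm₁, hd₁⟩ := ih (k + 1) (by omega)
      obtain ⟨-, hd₀⟩ := ih k (by omega)
      have hm : ((X - C (1 + c)) * PiP c (k + 1)).Monic := (monic_X_sub_C _).mul hm₁
      have hd : ((X - C (1 + c)) * PiP c (k + 1)).natDegree = k + 2 := by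
        rw [(monic_X_sub_C _).natDegree_mul hm₁, natDegree_X_sub_C, hd₁, add_comm]
      have hlt : (C c * PiP c k).natDegree < ((X - C (1 + c)) * PiP c (k + 1)).natDegree := by
        grw [hd, natDegree_C_mul_le, hd₀]
        omega
      rw [PiP_add_two hc]
      exact ⟨hm.sub_of_left (degree_lt_degree hlt),
        by rw [natDegree_sub_eq_left_of_natDegree_lt hlt, hd]⟩

noncomputable def piSequence (hc : 0 < c) : Polynomial.Sequence ℝ where
  elems' := PiP c
  degree_eq' k := by
    obtain ⟨hm, hd⟩ := monic_PiP_and_natDegree hc k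
    rw [degree_eq_natDegree hm.ne_zero, hd]

noncomputable def piBasis (hc : 0 < c) : Module.Basis ℕ ℝ ℝ[X] :=
  (piSequence hc).basis fun k => by
    change IsUnit (PiP c k).leadingCoeff
    rw [(monic_PiP_and_natDegree hc k).1.leadingCoeff]
    exact isUnit_one

theorem piBasis_apply (hc : 0 < c) (k : ℕ) : piBasis hc k = PiP c k :=
  Polynomial.Sequence.basis_eq_self _ _ k

theorem X_mul_PiP_zero (hc : 0 < c) : X * PiP c 0 = PiP c 1 + C c * PiP c 0 := by
  rw [PiP_one hc, PiP]
  ring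

theorem X_mul_PiP_succ (hc : 0 < c) (k : ℕ) :
    X * PiP c (k + 1) = PiP c (k + 2) + C (1 + c) * PiP c (k + 1) + C c * PiP c k := by
  rw [PiP_add_two hc]
  ring

theorem coord_zero_X_mul (hc : 0 < c) (f : ℝ[X]) :
    (piBasis hc).coord 0 (X * f) = c * (piBasis hc).coord 0 f + c * (piBasis hc).coord 1 f := by
  suffices (piBasis hc).coord 0 ∘ₗ LinearMap.mulLeft ℝ X =
      c • (piBasis hc).coord 0 + c • (piBasis hc).coord 1 from LinearMap.congr_fun this f
  refine (piBasis hc).ext fun j => ?_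
  rw [LinearMap.comp_apply, LinearMap.mulLeft_apply, piBasis_apply]
  rcases j with _ | j <;> [rw [X_mul_PiP_zero hc]; rw [X_mul_PiP_succ hc]] <;>
  · simp only [← smul_eq_C_mul, ← piBasis_apply hc]
    simp [Finsupp.single_apply]

theorem coord_succ_X_mul (hc : 0 < c) (k : ℕ) (f : ℝ[X]) :
    (piBasis hc).coord (k + 1) (X * f) = (piBasis hc).coord k f +
      (1 + c) * (piBasis hc).coord (k + 1) f + c * (piBasis hc).coord (k + 2) f := by
  suffices (piBasis hc).coord (k + 1) ∘ₗ LinearMap.mulLeft ℝ X = (piBasis hc).coord k +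
      (1 + c) • (piBasis hc).coord (k + 1) + c • (piBasis hc).coord (k + 2) from
    LinearMap.congr_fun this f
  refine (piBasis hc).ext fun j => ?_
  rw [LinearMap.comp_apply, LinearMap.mulLeft_apply, piBasis_apply]
  rcases j with _ | j <;> [rw [X_mul_PiP_zero hc]; rw [X_mul_PiP_succ hc]] <;>
  · simp only [← smul_eq_C_mul, ← piBasis_apply hc]
    simp [Finsupp.single_apply, eq_comm, ite_add_ite]

theorem coord_eq_of_eq_sum (hc : 0 < c) {f : ℝ[X]} {a : ℕ → ℝ} {N : ℕ}
    (hf : f = ∑ k ∈ Finset.range N, C (a k) * PiP c k) (ha : ∀ k, N ≤ k → a k = 0) (k : ℕ) :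
    (piBasis hc).coord k f = a k := by
  simp only [hf, ← smul_eq_C_mul, ← piBasis_apply hc, map_sum, map_smul,
    Module.Basis.coord_apply, Module.Basis.repr_self, Finsupp.single_apply, smul_eq_mul, mul_ite,
    mul_one, mul_zero, Finset.sum_ite_eq', Finset.mem_range]
  split_ifs with hk
  · rfl
  · exact (ha k (not_lt.mp hk)).symm

theorem coord_one (hc : 0 < c) (k : ℕ) : (piBasis hc).coord k 1 = if k = 0 then 1 else 0 := by
  rw [← show PiP c 0 = 1 from rfl, ← piBasis_apply hc]
  simp [Finsupp.single_apply, eq_comm]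

noncomputable def coordSeries (hc : 0 < c) (k : ℕ) : PowerSeries ℝ :=
  PowerSeries.mk fun n => (piBasis hc).coord k (X ^ n)

theorem coordSeries_zero (hc : 0 < c) :
    coordSeries hc 0 =
      1 + PowerSeries.X * (PowerSeries.C c * (coordSeries hc 0 + coordSeries hc 1)) := by
  ext (_ | n)
  · simp [coordSeries, coord_one, -Module.Basis.coord_apply]
  · simp [coordSeries, pow_succ', coord_zero_X_mul, -Module.Basis.coord_apply]
    ring

theorem coordSeries_succ (hc : 0 < c) (k : ℕ) :
    coordSeries hc (k + 1) = PowerSeries.X * (coordSeries hc k + PowerSeries.C (1 + c) *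
      coordSeries hc (k + 1) + PowerSeries.C c * coordSeries hc (k + 2)) := by
  ext (_ | n)
  · simp [coordSeries, coord_one, -Module.Basis.coord_apply]
  · simp [coordSeries, pow_succ', coord_succ_X_mul, add_mul, -Module.Basis.coord_apply]

end ShiftedChebyshev

theorem stmt6 (c : ℝ) (hc : 0 < c) (p : ℕ → ℕ → ℝ)
    (hexp : ∀ n : ℕ,
      (X ^ n : Polynomial ℝ) = ∑ k ∈ Finset.range (n + 1), C (p n k) * PiP c k)
    (hzero : ∀ n k : ℕ, n < k → p n k = 0) :
    ∀ k : ℕ,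
      PowerSeries.C (c ^ k) * PowerSeries.mk (fun n => p n k) =
        (PowerSeries.mk (fun n => p n 0) - 1) ^ k * PowerSeries.mk (fun n => p n 0) := by
  have hP : ∀ k, PowerSeries.mk (fun n => p n k) = ShiftedChebyshev.coordSeries hc k := by
    intro k
    ext n
    simp only [ShiftedChebyshev.coordSeries, PowerSeries.coeff_mk]
    exact (ShiftedChebyshev.coord_eq_of_eq_sum hc (hexp n) (hzero n) k).symm
  intro k
  simp only [hP]
  exact PowerSeries.C_pow_mul_eq_of_threeTermRec hc.ne' (ShiftedChebyshev.coordSeries_zero hc)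
    (ShiftedChebyshev.coordSeries_succ hc) k
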